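/- Let k ≥ 2 and 1 ≤ r ≤ k be integers, let n be a divisor of k such that d = k/n divides r, and let A ∈ 𝒜_n(r,k). Then the k-equivalence class of A equals {A+j modulo k : j = 0, 1, ..., n-1} and contains exactly n distinct sets. -/
import Mathlib


open Finset

/-- The set of residues of `A` modulo `k`. -/
def resSet (k : ℕ) (A : Finset ℕ) : Finset ℕ := A.image (· % k)

/-- The set `A + t = {a + t : a ∈ A}`. -/
def shiftSet (A : Finset ℕ) (t : ℕ) : Finset ℕ := A.image (· + t)

/-- Two finite sets of naturals are equal modulo `k` if they have the same residues mod `k`. -/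
def eqMod (k : ℕ) (A B : Finset ℕ) : Prop := resSet k A = resSet k B

/-- `fk k A` is the least positive `l` with `A + l` equal to `A` modulo `k`. -/
noncomputable def fk (k : ℕ) (A : Finset ℕ) : ℕ :=
  sInf {l : ℕ | 0 < l ∧ eqMod k (shiftSet A l) A}

/-- `𝒜(j, i)`: the collection of all `j`-element subsets of `{0, 1, ..., i-1}`. -/
def Acoll (j i : ℕ) : Finset (Finset ℕ) :=
  (Finset.range i).powerset.filter (fun A => A.card = j)

open scoped Classical in
/-- `𝒜_s(j, i)`: the members `A` of `𝒜(j, i)` with `f_i(A) = s`. -/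
noncomputable def Asub (s j i : ℕ) : Finset (Finset ℕ) :=
  (Acoll j i).filter (fun A => fk i A = s)

/-- The orbit of `A` under shifting modulo `k`: the residue sets of `A + j`, `0 ≤ j < k`.
Two subsets of `{0, ..., k-1}` are `k`-equivalent iff their orbits coincide. -/
def orb (k : ℕ) (A : Finset ℕ) : Finset (Finset ℕ) :=
  (Finset.range k).image (fun j => resSet k (shiftSet A j))

/-- `|𝒫_n(r, k)|`: the number of `k`-equivalence classes of `𝒜_n(r, k)`. -/
noncomputable def numClasses (n r k : ℕ) : ℕ := ((Asub n r k).image (orb k)).card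

namespace EqClassAux

/-- The shift-then-reduce operator. -/
def T (k j : ℕ) (A : Finset ℕ) : Finset ℕ := resSet k (shiftSet A j)

lemma T_eq (k j : ℕ) (A : Finset ℕ) : T k j A = A.image (fun a => (a + j) % k) := by
  simp [T, resSet, shiftSet, Finset.image_image, Function.comp_def]

lemma T_add (k a b : ℕ) (A : Finset ℕ) : T k (a + b) A = T k b (T k a A) := by
  simp only [T_eq, Finset.image_image]
  apply Finset.image_congr
  intro x _
  simp only [Function.comp_apply]
  rw [Nat.mod_add_mod, add_assoc]

lemma resSet_T (k j : ℕ) (A : Finset ℕ) : resSet k (T k j A) = T k j A := by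
  simp only [T_eq, resSet, Finset.image_image]
  apply Finset.image_congr
  intro x _
  simp only [Function.comp_apply]
  exact Nat.mod_mod_of_dvd _ dvd_rfl

lemma T_k (k : ℕ) (A : Finset ℕ) : T k k A = resSet k A := by
  rw [T_eq, resSet]
  apply Finset.image_congr
  intro x _
  exact Nat.add_mod_right x k

lemma resSet_eq_self {k : ℕ} {A : Finset ℕ} (h : A ⊆ Finset.range k) : resSet k A = A := by
  have h2 : ∀ x ∈ A, x % k = x := fun x hx => Nat.mod_eq_of_lt (Finset.mem_range.mp (h hx))
  rw [resSet, Finset.image_congr h2, Finset.image_id']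

end EqClassAux

open scoped Classical in
open EqClassAux in
/-- for `A ∈ 𝒜_n(r, k)` (where `n ∣ k` and `k/n ∣ r`), the `k`-equivalence
class of `A` equals `{A + j modulo k : j = 0, 1, ..., n-1}` and has exactly `n` elements. -/
theorem equivalence_class_eq (k r n : ℕ) (hk : 2 ≤ k) (hr1 : 1 ≤ r) (hrk : r ≤ k)
    (hnk : n ∣ k) (hdr : (k / n) ∣ r)
    (A : Finset ℕ) (hA : A ∈ Asub n r k) :
    (Asub n r k).filter (fun A' => ∃ j < k, eqMod k (shiftSet A j) A') =
      (Finset.range n).image (fun j => resSet k (shiftSet A j)) ∧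
    ((Asub n r k).filter (fun A' => ∃ j < k, eqMod k (shiftSet A j) A')).card = n := by
  classical
  have hk0 : 0 < k := by omega
  rw [Asub, Finset.mem_filter] at hA
  obtain ⟨hAc, hfk⟩ := hA
  rw [Acoll, Finset.mem_filter, Finset.mem_powerset] at hAc
  obtain ⟨hAsub, hAcard⟩ := hAc
  have hAres : resSet k A = A := resSet_eq_self hAsub
  set P : Set ℕ := {l | 0 < l ∧ T k l A = A} with hP
  have hPeq : {l : ℕ | 0 < l ∧ eqMod k (shiftSet A l) A} = P := by
    ext l
    simp only [hP, Set.mem_setOf_eq, eqMod, T, hAres]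
  unfold fk at hfk
  rw [hPeq] at hfk
  have hkP : k ∈ P := ⟨hk0, by rw [T_k, hAres]⟩
  have hnP : n ∈ P := hfk ▸ Nat.sInf_mem ⟨k, hkP⟩
  obtain ⟨hn0, hTn⟩ := hnP
  have hnk' : n ≤ k := hfk ▸ Nat.sInf_le hkP
  have hmin : ∀ l ∈ P, n ≤ l := fun l hl => hfk ▸ Nat.sInf_le hl
  have T_zero : T k 0 A = A := by
    have : shiftSet A 0 = A := by simp [shiftSet]
    rw [T, this, hAres]
  have mulp : ∀ q, T k (n * q) A = A := by
    intro q
    induction q with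
    | zero => simpa using T_zero
    | succ q ih => rw [Nat.mul_succ, T_add, ih, hTn]
  have hmodp : ∀ j, T k j A = T k (j % n) A := by
    intro j
    conv_lhs => rw [← Nat.div_add_mod j n]
    rw [T_add, mulp]
  have cancel0 : ∀ j l, T k l A = A → T k (j + l) A = T k j A := by
    intro j l h
    rw [add_comm, T_add, h]
  have cancel : ∀ j l, j ≤ k → T k (j + l) A = T k j A → T k l A = A := by
    intro j l hj h
    have h2 : T k (k - j) (T k (j + l) A) = T k (k - j) (T k j A) := by rw [h]
    rw [← T_add, ← T_add] at h2
    rw [show j + l + (k - j) = l + k by omega, show j + (k - j) = k by omega] at h2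
    rw [T_add, T_k, resSet_T, T_k, hAres] at h2
    exact h2
  have key : ∀ i j, i ≤ j → j < n → T k i A = T k j A → i = j := by
    intro i j hij hjn h
    by_contra hne
    have hd : 0 < j - i := by omega
    have h1 : T k (i + (j - i)) A = T k i A := by
      rw [show i + (j - i) = j from by omega, h]
    have hTA := cancel i (j - i) (by omega) h1
    have := hmin _ ⟨hd, hTA⟩
    omega
  have inj : ∀ i < n, ∀ j < n, T k i A = T k j A → i = j := by
    intro i hi j hj h
    rcases le_total i j with hij | hij
    · exact key i j hij hj h
    · exact (key j i hij hi h.symm).symm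
  have hTmem : ∀ j, T k j A ∈ Asub n r k := by
    intro j
    rw [Asub, Finset.mem_filter, Acoll, Finset.mem_filter, Finset.mem_powerset]
    refine ⟨⟨?_, ?_⟩, ?_⟩
    · intro x hx
      rw [T_eq] at hx
      obtain ⟨a, _, rfl⟩ := Finset.mem_image.mp hx
      exact Finset.mem_range.mpr (Nat.mod_lt _ hk0)
    · rw [T_eq, Finset.card_image_of_injOn, hAcard]
      intro a ha b hb hab
      have ha' := Finset.mem_range.mp (hAsub ha)
      have hb' := Finset.mem_range.mp (hAsub hb)
      have hm : a ≡ b [MOD k] := Nat.ModEq.add_right_cancel' j hab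
      have : a % k = b % k := hm
      rw [Nat.mod_eq_of_lt ha', Nat.mod_eq_of_lt hb'] at this
      exact this
    · show fk k (T k j A) = n
      unfold fk
      have hsetP : {l : ℕ | 0 < l ∧ eqMod k (shiftSet (T k j A) l) (T k j A)} = P := by
        ext l
        simp only [Set.mem_setOf_eq, hP]
        constructor
        · rintro ⟨hl, heq⟩
          refine ⟨hl, ?_⟩
          have heq' : resSet k (shiftSet (T k j A) l) = resSet k (T k j A) := heq
          have h1 : T k (j + l) A = T k j A := by
            rw [T_add]
            show resSet k (shiftSet (T k j A) l) = T k j A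
            rw [heq', resSet_T]
          have h2 : T k (j % n + l) A = T k (j % n) A := by
            rw [hmodp (j % n + l), Nat.mod_add_mod, ← hmodp (j + l), h1, hmodp]
          exact cancel (j % n) l (le_trans (le_of_lt (Nat.mod_lt j hn0)) hnk') h2
        · rintro ⟨hl, hTl⟩
          refine ⟨hl, ?_⟩
          show resSet k (shiftSet (T k j A) l) = resSet k (T k j A)
          rw [resSet_T]
          show T k l (T k j A) = T k j A
          rw [← T_add]
          exact cancel0 j l hTl
      rw [hsetP, hfk]
  have hset : (Asub n r k).filter (fun A' => ∃ j < k, eqMod k (shiftSet A j) A') =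
      (Finset.range n).image (fun j => resSet k (shiftSet A j)) := by
    ext A'
    simp only [Finset.mem_filter, Finset.mem_image, Finset.mem_range]
    constructor
    · rintro ⟨hA', j, hjk, heq⟩
      have hA'sub : A' ⊆ Finset.range k := by
        rw [Asub, Finset.mem_filter, Acoll, Finset.mem_filter, Finset.mem_powerset] at hA'
        exact hA'.1.1
      have hA'res : resSet k A' = A' := resSet_eq_self hA'sub
      have heq' : resSet k (shiftSet A j) = resSet k A' := heq
      have hTj : A' = T k j A := by rw [← hA'res, ← heq']; rfl
      refine ⟨j % n, Nat.mod_lt j hn0, ?_⟩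
      show T k (j % n) A = A'
      rw [hTj, ← hmodp]
    · rintro ⟨j, hjn, rfl⟩
      refine ⟨hTmem j, j, lt_of_lt_of_le hjn hnk', ?_⟩
      show resSet k (shiftSet A j) = resSet k (T k j A)
      rw [resSet_T]
      rfl
  refine ⟨hset, ?_⟩
  rw [hset, Finset.card_image_of_injOn, Finset.card_range]
  intro i hi j hj h
  exact inj i (Finset.mem_range.mp hi) j (Finset.mem_range.mp hj) h
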